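/- Let X be a smooth cubic surface over a field k and K/k a finite separable extension. The norm map Pic(X_K) → Pic(X) sends Δ(X_K) into Δ(X), and the restriction map Pic(X) → Pic(X_K) sends Δ(X) into Δ(X_K); the composite Norm_{K/k} ∘ Res_{k,K} on Pic(X)/Δ(X) is multiplication by [K:k]. -/

import Mathlib

/-!
Model: the Picard group of a smooth cubic surface over a separably closed
field is identified with `ℤ⁷ = Fin 7 → ℤ` with its standard basis
`λ₀, L₁, …, L₆` (pullback of a line and the six exceptional classes),
intersection form `picInter`, canonical class `KX = -3λ₀ + L₁ + ⋯ + L₆`.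
The classes of the 27 lines are exactly the classes `l` with
`l·l = -1` and `KX·l = -1`.
-/

def picInter (a b : Fin 7 → ℤ) : ℤ := a 0 * b 0 - ∑ i : Fin 6, a i.succ * b i.succ

def KX : Fin 7 → ℤ := ![-3, 1, 1, 1, 1, 1, 1]

def IsLineClass (l : Fin 7 → ℤ) : Prop := picInter l l = -1 ∧ picInter KX l = -1

/-!
Galois model: for a smooth cubic surface `X` over a field `k`, split by a
finite Galois extension with group `G`, the Galois action on the geometric
Picard group is a homomorphism `ρ : G →* Multiplicative (AddAut (Fin 7 → ℤ))` preserving the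
intersection form, the canonical class and the set of line classes.
`Pic(X)` is identified with the fixed subgroup `fixedSubgroup ρ`, and the
subgroup `Δ ⊆ Pic(X)` generated by norms (from finite separable extensions)
of lines is `Delta ρ`: the subgroup generated by the Galois-orbit sums
(= norms from the field of definition) of the 27 line classes.
-/

variable {G : Type*} [Group G] [Fintype G]

noncomputable def normOrbit (ρ : G →* Multiplicative (AddAut (Fin 7 → ℤ))) (l : Fin 7 → ℤ) : Fin 7 → ℤ :=
  ∑ m ∈ Finset.image (fun g => ρ g l) Finset.univ, m

noncomputable def Delta (ρ : G →* Multiplicative (AddAut (Fin 7 → ℤ))) : AddSubgroup (Fin 7 → ℤ) :=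
  AddSubgroup.closure { x | ∃ l, IsLineClass l ∧ x = normOrbit ρ l }

def fixedSubgroup (ρ : G →* Multiplicative (AddAut (Fin 7 → ℤ))) : AddSubgroup (Fin 7 → ℤ) where
  carrier := {x | ∀ g, ρ g x = x}
  zero_mem' := fun g => map_zero (Multiplicative.toAdd (ρ g))
  add_mem' := fun {a b} ha hb g => by rw [map_add, ha g, hb g]
  neg_mem' := fun {a} ha g => by rw [map_neg, ha g]

/-!
Restriction: the `G`-orbit of a line is `H`-stable, hence a disjoint union of `H`-orbits, so
its sum lies in `Δ(X_K)`. Norm: since `G` is the disjoint union of the cosets `R c * H`, the norm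
of `∑_{h ∈ H} h·l` is `∑_{g ∈ G} g·l`. Both sums are orbit sums times stabilizer orders and
`Stab_H l ≤ Stab_G l`, so the norm of the `H`-orbit sum of `l` is `[Stab_G l : Stab_H l]` times
its `G`-orbit sum (dividing in the torsion-free `ℤ⁷`). On `G`-fixed classes the norm is a sum
of `[G:H]` equal terms.
-/

open Finset

section Action

variable {Γ : Type*} [Group Γ]

def stabilizerOf {A : Type*} [Add A] (ρ : Γ →* Multiplicative (AddAut A)) (a : A) : Subgroup Γ where
  carrier := {g | ρ g a = a}
  one_mem' := by simp
  mul_mem' {g h} hg hh := by simp_all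
  inv_mem' {g} hg := by simpa using congrArg (ρ g⁻¹) hg.symm

lemma mem_stabilizerOf {A : Type*} [Add A] {ρ : Γ →* Multiplicative (AddAut A)} {a : A} {g : Γ} :
    g ∈ stabilizerOf ρ a ↔ ρ g a = a :=
  Iff.rfl

lemma bijective_section_mul {H : Subgroup Γ} {R : Γ ⧸ H → Γ}
    (hR : ∀ c : Γ ⧸ H, QuotientGroup.mk (R c) = c) :
    Function.Bijective fun p : (Γ ⧸ H) × H => R p.1 * p.2 :=
  have hR_inj : R.Injective := fun c c' h => (hR c).symm.trans ((congrArg _ h).trans (hR c'))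
  (Subgroup.isComplement_range_left hR).comp
    ((Set.rangeFactorization_bijective.mpr hR_inj).prodMap Function.bijective_id)

/-- The norm `Pic(X_K) → Pic(X)`, where `K` is the fixed field of `H`. -/
def normMap {A : Type*} [AddCommMonoid A] (ρ : Γ →* Multiplicative (AddAut A)) {H : Subgroup Γ}
    [Fintype (Γ ⧸ H)] (R : Γ ⧸ H → Γ) : A →+ A :=
  ∑ c, (Multiplicative.toAdd (ρ (R c))).toAddMonoidHom

lemma normMap_apply {A : Type*} [AddCommMonoid A] (ρ : Γ →* Multiplicative (AddAut A))
    {H : Subgroup Γ} [Fintype (Γ ⧸ H)] (R : Γ ⧸ H → Γ) (x : A) :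
    normMap ρ R x = ∑ c, ρ (R c) x := by
  simp [normMap]

lemma normMap_of_mem_fixedSubgroup {ρ : Γ →* Multiplicative (AddAut (Fin 7 → ℤ))}
    {H : Subgroup Γ} [Fintype (Γ ⧸ H)] (R : Γ ⧸ H → Γ) {x : Fin 7 → ℤ} (hx : x ∈ fixedSubgroup ρ) :
    normMap ρ R x = H.index • x := by
  rw [normMap_apply, sum_congr rfl fun c _ => hx (R c), sum_const, card_univ,
    Subgroup.index, Nat.card_eq_fintype_card]

end Action

section Orbits

variable (ρ : G →* Multiplicative (AddAut (Fin 7 → ℤ)))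

def orbitFinset (l : Fin 7 → ℤ) : Finset (Fin 7 → ℤ) := image (fun g => ρ g l) univ

lemma normOrbit_eq_sum_orbitFinset (l : Fin 7 → ℤ) : normOrbit ρ l = ∑ m ∈ orbitFinset ρ l, m :=
  rfl

variable {ρ}

lemma mem_orbitFinset {l m : Fin 7 → ℤ} : m ∈ orbitFinset ρ l ↔ ∃ g, ρ g l = m := by
  simp [orbitFinset]

lemma self_mem_orbitFinset (l : Fin 7 → ℤ) : l ∈ orbitFinset ρ l :=
  mem_orbitFinset.mpr ⟨1, by simp⟩

lemma orbitFinset_eq_of_mem {l m : Fin 7 → ℤ} (h : m ∈ orbitFinset ρ l) :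
    orbitFinset ρ m = orbitFinset ρ l := by
  obtain ⟨g, rfl⟩ := mem_orbitFinset.mp h
  ext m'
  simp only [mem_orbitFinset]
  constructor
  · rintro ⟨g', rfl⟩
    exact ⟨g' * g, by simp⟩
  · rintro ⟨g', rfl⟩
    exact ⟨g' * g⁻¹, by simp⟩

lemma normOrbit_mem_Delta {l : Fin 7 → ℤ} (hl : IsLineClass l) : normOrbit ρ l ∈ Delta ρ :=
  AddSubgroup.subset_closure ⟨l, hl, rfl⟩

/-- A `ρ`-stable set of lines is a disjoint union of orbits. -/
lemma sum_mem_Delta_of_forall_apply_mem {T : Finset (Fin 7 → ℤ)} (hT : ∀ m ∈ T, IsLineClass m)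
    (hstable : ∀ g, ∀ m ∈ T, ρ g m ∈ T) : ∑ m ∈ T, m ∈ Delta ρ := by
  have hfiber : ∀ l ∈ T,
      ∑ m ∈ orbitFinset ρ l, m = ∑ m ∈ T with orbitFinset ρ m = orbitFinset ρ l, m := by
    intro l hl
    refine sum_congr (ext fun m => ?_) fun _ _ => rfl
    rw [mem_filter]
    refine ⟨fun hm => ⟨?_, orbitFinset_eq_of_mem hm⟩, fun ⟨_, hm⟩ => hm ▸ self_mem_orbitFinset m⟩
    obtain ⟨g, rfl⟩ := mem_orbitFinset.mp hm
    exact hstable g l hl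
  rw [← sum_image' (f := fun O => ∑ m ∈ O, m) (fun m => m) hfiber]
  refine AddSubgroup.sum_mem _ fun O hO => ?_
  obtain ⟨l, hl, rfl⟩ := mem_image.mp hO
  exact normOrbit_mem_Delta (hT l hl)

lemma card_filter_apply_eq_card_stabilizerOf (l : Fin 7 → ℤ) (g₀ : G) :
    #{g | ρ g l = ρ g₀ l} = Nat.card (stabilizerOf ρ l) := by
  classical
  rw [Nat.card_eq_fintype_card, Fintype.card_subtype]
  refine card_nbij' (g₀⁻¹ * ·) (g₀ * ·) (fun g hg => ?_) (fun g hg => ?_)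
    (fun g _ => by simp) (fun g _ => by simp) <;> simp_all [mem_stabilizerOf]

lemma sum_apply_eq_nsmul_normOrbit (l : Fin 7 → ℤ) :
    ∑ g, ρ g l = Nat.card (stabilizerOf ρ l) • normOrbit ρ l := by
  rw [normOrbit_eq_sum_orbitFinset, smul_sum]
  refine (sum_comp (fun m => m) (fun g => ρ g l)).trans (sum_congr rfl fun m hm => ?_)
  obtain ⟨g₀, rfl⟩ := mem_orbitFinset.mp hm
  rw [card_filter_apply_eq_card_stabilizerOf]

end Orbits

lemma sum_sum_section_mul {Γ M : Type*} [Group Γ] [Fintype Γ] [AddCommMonoid M] {H : Subgroup Γ}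
    [Fintype H] [Fintype (Γ ⧸ H)] {R : Γ ⧸ H → Γ} (hR : ∀ c : Γ ⧸ H, QuotientGroup.mk (R c) = c)
    (f : Γ → M) : ∑ c, ∑ h : H, f (R c * h) = ∑ g, f g := by
  rw [← Fintype.sum_prod_type']
  exact Fintype.sum_bijective _ (bijective_section_mul hR) _ _ fun _ => rfl

section Norm

variable {ρ : G →* Multiplicative (AddAut (Fin 7 → ℤ))} {H : Subgroup G} {R : G ⧸ H → G}

lemma exists_normMap_normOrbit_eq_nsmul [Fintype H] [Fintype (G ⧸ H)] (hR : ∀ c : G ⧸ H, QuotientGroup.mk (R c) = c)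
    (l : Fin 7 → ℤ) : ∃ n : ℕ, normMap ρ R (normOrbit (ρ.comp H.subtype) l) = n • normOrbit ρ l := by
  set k := Nat.card (stabilizerOf (ρ.comp H.subtype) l)
  obtain ⟨n, hn⟩ : k ∣ Nat.card (stabilizerOf ρ l) :=
    Subgroup.card_comap_dvd_of_injective (stabilizerOf ρ l) H.subtype H.subtype_injective
  refine ⟨n, nsmul_right_injective (Nat.card_pos : 0 < k).ne' ?_⟩
  calc k • normMap ρ R (normOrbit (ρ.comp H.subtype) l)
      = normMap ρ R (∑ h : H, ρ.comp H.subtype h l) := by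
        rw [← map_nsmul, sum_apply_eq_nsmul_normOrbit]
    _ = ∑ c, ∑ h : H, ρ (R c * h) l := by
        rw [normMap_apply]
        refine sum_congr rfl fun c _ => ?_
        simp
    _ = ∑ g, ρ g l := sum_sum_section_mul hR (fun g => ρ g l)
    _ = k • n • normOrbit ρ l := by rw [sum_apply_eq_nsmul_normOrbit, hn, mul_smul]

lemma Delta_comp_subtype_le_comap_normMap [Fintype H] [Fintype (G ⧸ H)]
    (hR : ∀ c : G ⧸ H, QuotientGroup.mk (R c) = c) :
    Delta (ρ.comp H.subtype) ≤ (Delta ρ).comap (normMap ρ R) := by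
  refine (AddSubgroup.closure_le _).mpr ?_
  rintro _ ⟨l, hl, rfl⟩
  obtain ⟨n, hn⟩ := exists_normMap_normOrbit_eq_nsmul hR l
  rw [SetLike.mem_coe, AddSubgroup.mem_comap, hn]
  exact AddSubgroup.nsmul_mem _ (normOrbit_mem_Delta hl) n

end Norm

lemma Delta_le_Delta_comp_subtype {ρ : G →* Multiplicative (AddAut (Fin 7 → ℤ))}
    (hlines : ∀ (g : G) (l : Fin 7 → ℤ), IsLineClass l → IsLineClass (ρ g l))
    (H : Subgroup G) [Fintype H] : Delta ρ ≤ Delta (ρ.comp H.subtype) := by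
  refine (AddSubgroup.closure_le _).mpr ?_
  rintro _ ⟨l, hl, rfl⟩
  rw [SetLike.mem_coe, normOrbit_eq_sum_orbitFinset]
  refine sum_mem_Delta_of_forall_apply_mem (fun m hm => ?_) fun h m hm => ?_
  · obtain ⟨g, rfl⟩ := mem_orbitFinset.mp hm
    exact hlines g l hl
  · obtain ⟨g, rfl⟩ := mem_orbitFinset.mp hm
    exact mem_orbitFinset.mpr ⟨h * g, by simp⟩

/-- The subgroup `H ≤ G` is the Galois group of the splitting field over `K`, so that
`[K:k] = H.index`; `R` picks a representative of each coset `gH`. -/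
theorem stmt10_general
    (ρ : G →* Multiplicative (AddAut (Fin 7 → ℤ)))
    (hlines : ∀ (g : G) (l : Fin 7 → ℤ), IsLineClass l → IsLineClass (ρ g l))
    (H : Subgroup G) [Fintype H] [Fintype (G ⧸ H)]
    (R : G ⧸ H → G) (hR : ∀ c : G ⧸ H, QuotientGroup.mk (R c) = c) :
    (∀ x ∈ Delta (ρ.comp H.subtype), (∀ h : H, ρ h x = x) →
        (∑ c : G ⧸ H, ρ (R c) x) ∈ Delta ρ) ∧
      (∀ x ∈ Delta ρ, x ∈ Delta (ρ.comp H.subtype)) ∧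
      ∀ x ∈ fixedSubgroup ρ, (∑ c : G ⧸ H, ρ (R c) x) = H.index • x := by
  refine ⟨fun x hx _ => ?_, fun x hx => Delta_le_Delta_comp_subtype hlines H hx, fun x hx => ?_⟩
  · rw [← normMap_apply]
    exact Delta_comp_subtype_le_comap_normMap hR hx
  · rw [← normMap_apply]
    exact normMap_of_mem_fixedSubgroup R hx

/-- Norm and restriction for a finite separable extension `K/k`,
corresponding to a subgroup `H ≤ G` (so `[K:k] = [G:H] = H.index`), with a
choice `R` of coset representatives.  (a) The norm
`x ↦ ∑_{c ∈ G/H} (R c)·x` maps `Δ(X_K)` into `Δ(X)`; (b) restriction maps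
`Δ(X)` into `Δ(X_K)`; (c) on Galois-fixed classes the composite
`Norm ∘ Res` is multiplication by `[K:k]`, hence so on `Pic(X)/Δ(X)`. -/
theorem stmt10
    (ρ : G →* Multiplicative (AddAut (Fin 7 → ℤ)))
    (hlines : ∀ (g : G) (l : Fin 7 → ℤ), IsLineClass l → IsLineClass (ρ g l))
    (hint : ∀ (g : G) (a b : Fin 7 → ℤ), picInter (ρ g a) (ρ g b) = picInter a b)
    (hK : ∀ g : G, ρ g KX = KX)
    (H : Subgroup G) [Fintype H] [Fintype (G ⧸ H)]
    (R : G ⧸ H → G) (hR : ∀ c : G ⧸ H, QuotientGroup.mk (R c) = c) :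
    (∀ x ∈ Delta (ρ.comp H.subtype), (∀ h : H, ρ h x = x) →
        (∑ c : G ⧸ H, ρ (R c) x) ∈ Delta ρ) ∧
      (∀ x ∈ Delta ρ, x ∈ Delta (ρ.comp H.subtype)) ∧
      ∀ x ∈ fixedSubgroup ρ, (∑ c : G ⧸ H, ρ (R c) x) = H.index • x :=
  stmt10_general ρ hlines H R hR
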